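/- If G is a connected undirected weighted graph, then the graph G# whose adjacency matrix is the group inverse A# of the adjacency matrix A of G is also connected. -/

import Mathlib

open SimpleGraph

/-- `X` is the group inverse of `A`. -/
def IsGroupInverse {n : Type*} [Fintype n] (A X : Matrix n n ℝ) : Prop :=
  A * X * A = A ∧ X * A * X = X ∧ A * X = X * A

/-- A matching of a graph: a set of pairwise non-incident edges. -/
def IsMatching {V : Type*} (G : SimpleGraph V) (M : Finset (Sym2 V)) : Prop :=
  (↑M : Set (Sym2 V)) ⊆ G.edgeSet ∧
    ∀ e ∈ M, ∀ f ∈ M, e ≠ f → ∀ v : V, ¬(v ∈ e ∧ v ∈ f)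

/-- A maximum matching: a matching of maximum cardinality. -/
def IsMaxMatching {V : Type*} (G : SimpleGraph V) (M : Finset (Sym2 V)) : Prop :=
  IsMatching G M ∧ ∀ N : Finset (Sym2 V), IsMatching G N → N.card ≤ M.card

/-- A nonempty list of edges alternately in and out of `M`,
beginning and ending with edges of `M`. -/
def IsAltEdgeList {V : Type*} (M : Set (Sym2 V)) : List (Sym2 V) → Prop
  | [] => False
  | [e] => e ∈ M
  | e :: f :: rest => e ∈ M ∧ f ∉ M ∧ IsAltEdgeList M rest

/-- A pair of vertices is maximally matchable if they are joined by a path that is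
alternating with respect to some maximum matching. -/
def MaxMatchable {V : Type*} (G : SimpleGraph V) (u v : V) : Prop :=
  ∃ (p : G.Walk u v) (M : Finset (Sym2 V)),
    p.IsPath ∧ IsMaxMatching G M ∧ IsAltEdgeList (↑M) p.edges

/-- `G` is a star: some center `c` is adjacent to exactly the other vertices,
and there are no other edges. -/
def IsStar {V : Type*} (G : SimpleGraph V) : Prop :=
  ∃ c : V, ∀ u v : V, G.Adj u v ↔ ((u = c ∧ v ≠ c) ∨ (v = c ∧ u ≠ c))

/-- The class 𝕋: trees with at least one non-pendant vertex in which every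
non-pendant vertex is adjacent to a pendant vertex. -/
def InClassT {V : Type*} [Fintype V] (T : SimpleGraph V) [DecidableRel T.Adj] : Prop :=
  T.IsTree ∧ (∃ v, T.degree v ≠ 1) ∧
    ∀ v, T.degree v ≠ 1 → ∃ u, T.Adj v u ∧ T.degree u = 1

/-- The number of pendant neighbours of `v`. -/
def pendantNbrs {V : Type*} [Fintype V] [DecidableEq V] (T : SimpleGraph V)
    [DecidableRel T.Adj] (v : V) : ℕ :=
  ((T.neighborFinset v).filter fun u => T.degree u = 1).card

/-!
If `X` is the group inverse of `A`, then every matrix commuting with `A` commutes with `X`, and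
vice versa since `A` is in turn the group inverse of `X`. The graph `fromRel (M · · ≠ 0)` is
disconnected exactly when `M` commutes with the diagonal projection onto a nonempty proper
vertex set, so the two graphs are connected together.
-/

open Matrix SimpleGraph

namespace IsGroupInverse

variable {n : Type*} [Fintype n] {A X : Matrix n n ℝ}

theorem symm (h : IsGroupInverse A X) : IsGroupInverse X A :=
  ⟨h.2.1, h.1, h.2.2.symm⟩

theorem commute {B : Matrix n n ℝ} (h : IsGroupInverse A X) (hB : Commute B A) :
    Commute B X := by
  obtain ⟨hAXA, hXAX, hAX⟩ := h
  have hXXA : X * (X * A) = X := by rw [← hAX, ← Matrix.mul_assoc, hXAX]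
  have hAXX : A * (X * X) = X := by rw [← Matrix.mul_assoc, hAX, hXAX]
  have hXXA_mul (Y : Matrix n n ℝ) : X * (X * (A * Y)) = X * Y := by
    rw [← Matrix.mul_assoc X A, ← Matrix.mul_assoc, hXXA]
  have hAXA_mul (Y : Matrix n n ℝ) : A * (X * (A * Y)) = A * Y := by
    rw [← Matrix.mul_assoc X A, ← Matrix.mul_assoc, ← Matrix.mul_assoc, hAXA]
  have hXB : X * B = X * (B * (A * X)) :=
    calc X * B = X * (X * (B * A)) := by rw [hB.eq, hXXA_mul]
      _ = X * (X * (A * (B * (X * A)))) := by rw [← hB.left_comm, ← Matrix.mul_assoc A X A, hAXA]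
      _ = X * (B * (A * X)) := by rw [hXXA_mul, hAX]
  have hBX : B * X = X * (B * (A * X)) :=
    calc B * X = A * (X * (A * (B * (X * X)))) := by rw [hAXA_mul, ← hB.left_comm, hAXX]
      _ = A * (X * (B * X)) := by rw [← hB.left_comm, hAXX]
      _ = X * (B * (A * X)) := by rw [hB.left_comm, ← Matrix.mul_assoc A X, hAX, Matrix.mul_assoc]
  exact hBX.trans hXB.symm

end IsGroupInverse

theorem Matrix.commute_diagonal_indicator_iff {V R : Type*} [Fintype V] [DecidableEq V]
    [NonAssocSemiring R] (S : Set V) (M : Matrix V V R) :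
    Commute (diagonal (S.indicator 1)) M ↔ ∀ i ∈ S, ∀ j ∉ S, M i j = 0 ∧ M j i = 0 := by
  rw [Commute, SemiconjBy, ← Matrix.ext_iff]
  simp only [diagonal_mul, mul_diagonal]
  constructor
  · intro h i hi j hj
    exact ⟨by simpa [hi, hj] using h i j, by simpa [hi, hj] using (h j i).symm⟩
  · intro h i j
    by_cases hi : i ∈ S <;> by_cases hj : j ∈ S <;>
      simp [Set.indicator_of_mem, Set.indicator_of_notMem, hi, hj, h i, h j]

theorem SimpleGraph.preconnected_fromRel_ne_zero_iff {V R : Type*} [Fintype V] [DecidableEq V]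
    [NonAssocSemiring R] (M : Matrix V V R) :
    (fromRel fun i j => M i j ≠ 0).Preconnected ↔
      ∀ S : Set V, Commute (diagonal (S.indicator 1)) M → S.Nonempty → S = Set.univ := by
  simp only [commute_diagonal_indicator_iff]
  constructor
  · rintro hpre S hS ⟨u, hu⟩
    refine Set.eq_univ_of_forall fun v => by_contra fun hv => ?_
    obtain ⟨⟨⟨a, b⟩, hab⟩, -, ha, hb⟩ := (hpre u v).some.exists_boundary_dart S hu hv
    rw [fromRel_adj] at hab
    obtain ⟨hMab, hMba⟩ := hS a ha b hb
    exact hab.2.elim (· hMab) (· hMba)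
  · intro h u v
    set S : Set V := {w | (fromRel fun i j => M i j ≠ 0).Reachable u w}
    have hS : ∀ i ∈ S, ∀ j ∉ S, M i j = 0 ∧ M j i = 0 := by
      intro i hi j hj
      by_contra hM
      refine hj (hi.trans (Adj.reachable ?_))
      rw [fromRel_adj]
      exact ⟨fun hij => hj (hij ▸ hi), by tauto⟩
    exact Set.eq_univ_iff_forall.mp (h S hS ⟨u, Reachable.refl u⟩) v

theorem group_inverse_graph_connected {V : Type*} [Fintype V]
    (A X : Matrix V V ℝ)
    (hconn : (SimpleGraph.fromRel fun i j => A i j ≠ 0).Connected)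
    (hX : IsGroupInverse A X) :
    (SimpleGraph.fromRel fun i j => X i j ≠ 0).Connected := by
  classical
  rw [connected_iff, preconnected_fromRel_ne_zero_iff] at hconn ⊢
  exact ⟨fun S hS => hconn.1 S (hX.symm.commute hS), hconn.2⟩
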